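/- Let P be a finite projective plane and M_P the associated simple rank-3 matroid. Let M0, M1, M2 be simple ∧-matroids of rank ≤ 3 with M0 a substructure of both M1 and M2 and M1 ∩ M2 = M0, and suppose M1 and M2 both omit M_P. Then the canonical amalgam M3 = M1 ⊕_{M0} M2 omits M_P. In particular: (i) if ℓ is a line of M_j (j ∈ {1,2}) not of the form a0 ∨ a1 for any two distinct points a0, a1 ∈ M0, then the set of points of M3 on the line of M3 extending ℓ equals the set of points of M_j on ℓ; and (ii) every line of M3 incident with at most one point of M1 and at most one point of M2 contains exactly two points. -/
import Mathlib


namespace PaoliniMatroids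

open Function Set

/-- The "line" through `a` and `b` determined by a ternary collinearity relation `R`:
the set `{a, b} ∪ {x | R a b x}`. -/
def lineOf {V : Type*} (R : V → V → V → Prop) (a b : V) : Set V :=
  {a, b} ∪ {x | R a b x}

/-- A simple ∧-matroid of rank ≤ 3, with domain `carrier` inside the ambient type `V`.
`R` is the ternary dependency (collinearity) relation and `wedge` is the 4-ary
intersection-of-lines function determined by `R`. -/
structure WM (V : Type*) where
  carrier : Set V
  R : V → V → V → Prop
  wedge : V → V → V → V → V
  R_mem : ∀ a b c, R a b c → a ∈ carrier ∧ b ∈ carrier ∧ c ∈ carrier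
  wedge_mem : ∀ a b c d, a ∈ carrier → b ∈ carrier → c ∈ carrier → d ∈ carrier →
      wedge a b c d ∈ carrier
  irrefl : ∀ a b c, R a b c → a ≠ b ∧ a ≠ c ∧ b ≠ c
  symm_swap : ∀ a b c, R a b c → R b a c
  symm_rot : ∀ a b c, R a b c → R b c a
  exchange : ∀ a b c d, R a b c → R a b d → ∀ x y z,
      x ∈ ({a, b, c, d} : Set V) → y ∈ ({a, b, c, d} : Set V) → z ∈ ({a, b, c, d} : Set V) →
      x ≠ y → x ≠ z → y ≠ z → R x y z
  wedge_det : ∀ a b c d, a ∈ carrier → b ∈ carrier → c ∈ carrier → d ∈ carrier →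
      (a ≠ b ∧ c ≠ d ∧ lineOf R a b ≠ lineOf R c d ∧
        wedge a b c d ∈ lineOf R a b ∧ wedge a b c d ∈ lineOf R c d ∧
        wedge a b c d ∉ ({a, b, c, d} : Set V)) ∨
      (wedge a b c d = a ∧ ¬ ∃ p, a ≠ b ∧ c ≠ d ∧ lineOf R a b ≠ lineOf R c d ∧
        p ∈ lineOf R a b ∧ p ∈ lineOf R c d ∧ p ∉ ({a, b, c, d} : Set V))

/-- An embedding of ∧-matroids: an injective map (on the domain) preserving `R`
in both directions and preserving the ∧-function. -/
structure IsEmb {V W : Type*} (M : WM V) (N : WM W) (f : V → W) : Prop where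
  maps : ∀ x ∈ M.carrier, f x ∈ N.carrier
  inj : ∀ x ∈ M.carrier, ∀ y ∈ M.carrier, f x = f y → x = y
  rel : ∀ a ∈ M.carrier, ∀ b ∈ M.carrier, ∀ c ∈ M.carrier,
      (M.R a b c ↔ N.R (f a) (f b) (f c))
  wedge : ∀ a ∈ M.carrier, ∀ b ∈ M.carrier, ∀ c ∈ M.carrier, ∀ d ∈ M.carrier,
      f (M.wedge a b c d) = N.wedge (f a) (f b) (f c) (f d)

/-- An isomorphism of ∧-matroids: an embedding which is onto the target domain. -/
def IsIso {V W : Type*} (M : WM V) (N : WM W) (f : V → W) : Prop :=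
  IsEmb M N f ∧ N.carrier ⊆ f '' M.carrier

/-- `M` is a substructure of `N`: the domain of `M` is a subset of that of `N`
(necessarily closed under the ∧-function of `N`) and `R`, `∧` are induced. -/
structure Sub {V : Type*} (M N : WM V) : Prop where
  sub : M.carrier ⊆ N.carrier
  rel : ∀ a ∈ M.carrier, ∀ b ∈ M.carrier, ∀ c ∈ M.carrier, (M.R a b c ↔ N.R a b c)
  wedge : ∀ a ∈ M.carrier, ∀ b ∈ M.carrier, ∀ c ∈ M.carrier, ∀ d ∈ M.carrier,
      M.wedge a b c d = N.wedge a b c d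

/-- The matroid has rank 3: there are three (pairwise distinct) non-collinear points. -/
def Rank3 {V : Type*} (M : WM V) : Prop :=
  ∃ a ∈ M.carrier, ∃ b ∈ M.carrier, ∃ c ∈ M.carrier,
    a ≠ b ∧ a ≠ c ∧ b ≠ c ∧ ¬ M.R a b c

/-- An automorphism of a ∧-matroid: a bijection of the domain preserving `R` in both
directions and preserving the ∧-function. -/
def IsAut {V : Type*} (M : WM V) (g : V → V) : Prop :=
  Set.BijOn g M.carrier M.carrier ∧
  (∀ a ∈ M.carrier, ∀ b ∈ M.carrier, ∀ c ∈ M.carrier,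
      (M.R a b c ↔ M.R (g a) (g b) (g c))) ∧
  (∀ a ∈ M.carrier, ∀ b ∈ M.carrier, ∀ c ∈ M.carrier, ∀ d ∈ M.carrier,
      g (M.wedge a b c d) = M.wedge (g a) (g b) (g c) (g d))

/-- A projective plane: a point-line incidence system where two distinct points lie on a
unique common line, two distinct lines meet in a unique point, and there are four points
no three of which are collinear. -/
structure ProjPlane where
  Point : Type
  Line : Type
  incid : Point → Line → Prop
  unique_line : ∀ p q : Point, p ≠ q → ∃! l : Line, incid p l ∧ incid q l
  unique_point : ∀ l m : Line, l ≠ m → ∃! p : Point, incid p l ∧ incid p m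
  nondeg : ∃ p₁ p₂ p₃ p₄ : Point, p₁ ≠ p₂ ∧ p₁ ≠ p₃ ∧ p₁ ≠ p₄ ∧ p₂ ≠ p₃ ∧ p₂ ≠ p₄ ∧ p₃ ≠ p₄ ∧
    ∀ l : Line, ¬(incid p₁ l ∧ incid p₂ l ∧ incid p₃ l) ∧
      ¬(incid p₁ l ∧ incid p₂ l ∧ incid p₄ l) ∧
      ¬(incid p₁ l ∧ incid p₃ l ∧ incid p₄ l) ∧
      ¬(incid p₂ l ∧ incid p₃ l ∧ incid p₄ l)

/-- The ternary relation of the simple rank-3 matroid `M_P` associated with a projective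
plane: `R a b c` iff `a, b, c` are pairwise distinct collinear points. -/
def ProjPlane.Rmat (P : ProjPlane) (a b c : P.Point) : Prop :=
  a ≠ b ∧ a ≠ c ∧ b ≠ c ∧ ∃ l : P.Line, P.incid a l ∧ P.incid b l ∧ P.incid c l

/-- `N` omits the matroid `M_P` of the projective plane `P`: no subset of the domain of `N`,
with the induced ternary relation, is isomorphic (as a matroid) to `M_P`. -/
def Omits {V : Type*} (N : WM V) (P : ProjPlane) : Prop :=
  ¬ ∃ e : P.Point → V, Function.Injective e ∧ (∀ p, e p ∈ N.carrier) ∧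
      ∀ a b c, P.Rmat a b c ↔ N.R (e a) (e b) (e c)

/-- `x` lies on the line spanned by `a'` and `b'`, computed in `M1` if `x` lies in `M1`,
or in `M2` if `x` lies in `M2`. -/
def OnAmalgLine {V : Type*} (M1 M2 : WM V) (a' b' x : V) : Prop :=
  (x ∈ M1.carrier ∧ x ∈ lineOf M1.R a' b') ∨ (x ∈ M2.carrier ∧ x ∈ lineOf M2.R a' b')

/-- The ternary relation of the canonical amalgam `M1 ⊕_{M0} M2`. -/
def AmalgR {V : Type*} (M0 M1 M2 : WM V) (a b c : V) : Prop :=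
  M1.R a b c ∨ M2.R a b c ∨
    (a ≠ b ∧ a ≠ c ∧ b ≠ c ∧ ∃ a' ∈ M0.carrier, ∃ b' ∈ M0.carrier, a' ≠ b' ∧
      OnAmalgLine M1 M2 a' b' a ∧ OnAmalgLine M1 M2 a' b' b ∧ OnAmalgLine M1 M2 a' b' c)

/-- `M3` is the canonical amalgam `M1 ⊕_{M0} M2`: its domain is the union of the domains,
its ternary relation is `AmalgR`, and its ∧-function is nontrivial exactly on pairs of
intersecting lines coming from `M1` or from `M2`, where it takes the value computed there. -/
structure IsCanonicalAmalgam {V : Type*} (M0 M1 M2 M3 : WM V) : Prop where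
  carrier_eq : M3.carrier = M1.carrier ∪ M2.carrier
  R_iff : ∀ a b c, M3.R a b c ↔ AmalgR M0 M1 M2 a b c
  wedge_spec : ∀ a b c d, a ∈ M3.carrier → b ∈ M3.carrier → c ∈ M3.carrier →
      d ∈ M3.carrier →
      (∃ Ml : WM V, (Ml = M1 ∨ Ml = M2) ∧ ∃ a' ∈ Ml.carrier, ∃ b' ∈ Ml.carrier,
          ∃ c' ∈ Ml.carrier, ∃ d' ∈ Ml.carrier,
          lineOf M3.R a b = lineOf M3.R a' b' ∧ lineOf M3.R c d = lineOf M3.R c' d' ∧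
          Ml.wedge a' b' c' d' ≠ a' ∧ M3.wedge a b c d = Ml.wedge a' b' c' d') ∨
      (M3.wedge a b c d = a ∧
        ¬ ∃ Ml : WM V, (Ml = M1 ∨ Ml = M2) ∧ ∃ a' ∈ Ml.carrier, ∃ b' ∈ Ml.carrier,
          ∃ c' ∈ Ml.carrier, ∃ d' ∈ Ml.carrier,
          lineOf M3.R a b = lineOf M3.R a' b' ∧ lineOf M3.R c d = lineOf M3.R c' d' ∧
          Ml.wedge a' b' c' d' ≠ a')

lemma mem_lineOf {R : V → V → V → Prop} {a b x : V} :
    x ∈ lineOf R a b ↔ x = a ∨ x = b ∨ R a b x := by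
  simp [lineOf, or_assoc]

lemma line_swap (M : WM V) (a b : V) : lineOf M.R a b = lineOf M.R b a := by
  ext z
  rw [mem_lineOf, mem_lineOf]
  constructor <;>
    (rintro (h | h | h)
     exacts [Or.inr (Or.inl h), Or.inl h, Or.inr (Or.inr (M.symm_swap _ _ _ h))])

lemma mem_line_trans (M : WM V) {a b c : V} (hab : a ≠ b) (hc : M.R a b c) :
    lineOf M.R a c ⊆ lineOf M.R a b := by
  intro z hz
  rcases mem_lineOf.mp hz with rfl | rfl | h
  · exact mem_lineOf.mpr (Or.inl rfl)
  · exact mem_lineOf.mpr (Or.inr (Or.inr hc))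
  · by_cases hzb : z = b
    · exact mem_lineOf.mpr (Or.inr (Or.inl hzb))
    · have hacb : M.R a c b := M.symm_swap _ _ _ (M.symm_rot _ _ _ (M.symm_rot _ _ _ hc))
      have haz : a ≠ z := (M.irrefl a c z h).2.1
      exact mem_lineOf.mpr (Or.inr (Or.inr
        (M.exchange a c b z hacb h a b z (by simp) (by simp) (by simp) hab haz (Ne.symm hzb))))

lemma line_sub (M : WM V) {a b x y : V} (hab : a ≠ b)
    (hx : x ∈ lineOf M.R a b) (hy : y ∈ lineOf M.R a b) (hxy : x ≠ y) :
    lineOf M.R x y ⊆ lineOf M.R a b := by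
  rcases mem_lineOf.mp hx with h | h | hRx
  · rcases mem_lineOf.mp hy with h' | h' | hRy
    · exact absurd (h.trans h'.symm) hxy
    · rw [h, h']
    · rw [h]; exact mem_line_trans M hab hRy
  · rcases mem_lineOf.mp hy with h' | h' | hRy
    · rw [h, h', line_swap M b a]
    · exact absurd (h.trans h'.symm) hxy
    · rw [h]
      have h1 : lineOf M.R b y ⊆ lineOf M.R b a :=
        mem_line_trans M hab.symm (M.symm_swap _ _ _ hRy)
      rw [line_swap M b a] at h1
      exact h1
  · rcases mem_lineOf.mp hy with h' | h' | hRy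
    · rw [h', line_swap M x a]; exact mem_line_trans M hab hRx
    · rw [h', line_swap M x b]
      have h1 : lineOf M.R b x ⊆ lineOf M.R b a :=
        mem_line_trans M hab.symm (M.symm_swap _ _ _ hRx)
      rw [line_swap M b a] at h1
      exact h1
    · have hax : a ≠ x := (M.irrefl _ _ _ hRx).2.1
      have hay : a ≠ y := (M.irrefl _ _ _ hRy).2.1
      have hxay : M.R x a y :=
        M.exchange a b x y hRx hRy x a y (by simp) (by simp) (by simp) hax.symm hxy hay
      have s1 : lineOf M.R x y ⊆ lineOf M.R x a := mem_line_trans M hax.symm hxay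
      have s2 : lineOf M.R x a ⊆ lineOf M.R a b := by
        rw [line_swap M x a]; exact mem_line_trans M hab hRx
      exact s1.trans s2

lemma base_mem (M : WM V) {a b x y : V} (hab : a ≠ b)
    (hx : x ∈ lineOf M.R a b) (hy : y ∈ lineOf M.R a b) (hxy : x ≠ y) :
    a ∈ lineOf M.R x y := by
  rcases mem_lineOf.mp hx with h | h | hRx
  · exact mem_lineOf.mpr (Or.inl h.symm)
  · rcases mem_lineOf.mp hy with h' | h' | hRy
    · exact mem_lineOf.mpr (Or.inr (Or.inl h'.symm))
    · exact absurd (h.trans h'.symm) hxy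
    · refine mem_lineOf.mpr (Or.inr (Or.inr ?_))
      rw [h]
      exact M.symm_rot _ _ _ hRy
  · rcases mem_lineOf.mp hy with h' | h' | hRy
    · exact mem_lineOf.mpr (Or.inr (Or.inl h'.symm))
    · refine mem_lineOf.mpr (Or.inr (Or.inr ?_))
      rw [h']
      exact M.symm_swap _ _ _ (M.symm_rot _ _ _ hRx)
    · have hax : a ≠ x := (M.irrefl _ _ _ hRx).2.1
      have hay : a ≠ y := (M.irrefl _ _ _ hRy).2.1
      exact mem_lineOf.mpr (Or.inr (Or.inr
        (M.exchange a b x y hRx hRy x y a (by simp) (by simp) (by simp) hxy hax.symm hay.symm)))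

lemma line_eq (M : WM V) {a b x y : V} (hab : a ≠ b)
    (hx : x ∈ lineOf M.R a b) (hy : y ∈ lineOf M.R a b) (hxy : x ≠ y) :
    lineOf M.R x y = lineOf M.R a b := by
  refine Subset.antisymm (line_sub M hab hx hy hxy) ?_
  have hx' : x ∈ lineOf M.R b a := by rw [line_swap M b a]; exact hx
  have hy' : y ∈ lineOf M.R b a := by rw [line_swap M b a]; exact hy
  have hb : b ∈ lineOf M.R x y := base_mem M hab.symm hx' hy' hxy
  exact line_sub M hxy (base_mem M hab hx hy hxy) hb hab

lemma self_mem_line_left (R : V → V → V → Prop) (a b : V) : a ∈ lineOf R a b :=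
  mem_lineOf.mpr (Or.inl rfl)

lemma self_mem_line_right (R : V → V → V → Prop) (a b : V) : b ∈ lineOf R a b :=
  mem_lineOf.mpr (Or.inr (Or.inl rfl))

lemma amalgR_symm {M0 Ma Mb : WM V} {a b c : V} (h : AmalgR M0 Ma Mb a b c) :
    AmalgR M0 Mb Ma a b c := by
  rcases h with h | h | ⟨h1, h2, h3, a', ha', b', hb', hab, hA, hB, hC⟩
  · exact Or.inr (Or.inl h)
  · exact Or.inl h
  · exact Or.inr (Or.inr ⟨h1, h2, h3, a', ha', b', hb', hab, Or.symm hA, Or.symm hB, Or.symm hC⟩)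

lemma wedge_forces {M0 M : WM V} (h0 : Sub M0 M)
    {u a1 b1 a2 b2 : V} (hu : u ∈ M.carrier)
    (ha1 : a1 ∈ M0.carrier) (hb1 : b1 ∈ M0.carrier)
    (ha2 : a2 ∈ M0.carrier) (hb2 : b2 ∈ M0.carrier)
    (h1 : a1 ≠ b1) (h2 : a2 ≠ b2)
    (hL : lineOf M.R a1 b1 ≠ lineOf M.R a2 b2)
    (hu1 : u ∈ lineOf M.R a1 b1) (hu2 : u ∈ lineOf M.R a2 b2)
    (hne1 : u ≠ a1) (hne2 : u ≠ b1) (hne3 : u ≠ a2) (hne4 : u ≠ b2) :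
    u ∈ M0.carrier := by
  have m1 := h0.sub ha1
  have m2 := h0.sub hb1
  have m3 := h0.sub ha2
  have m4 := h0.sub hb2
  have hnotmem : u ∉ ({a1, b1, a2, b2} : Set V) := by
    intro h
    simp only [Set.mem_insert_iff, Set.mem_singleton_iff] at h
    rcases h with h | h | h | h
    exacts [hne1 h, hne2 h, hne3 h, hne4 h]
  rcases M.wedge_det a1 b1 a2 b2 m1 m2 m3 m4 with ⟨_, _, _, hw1, hw2, _⟩ | ⟨_, hno⟩
  · have hwu : M.wedge a1 b1 a2 b2 = u := by
      by_contra hne'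
      have e1 := line_eq M h1 hu1 hw1 (fun h => hne' h.symm)
      have e2 := line_eq M h2 hu2 hw2 (fun h => hne' h.symm)
      exact hL (e1.symm.trans e2)
    rw [← hwu, ← h0.wedge a1 ha1 b1 hb1 a2 ha2 b2 hb2]
    exact M0.wedge_mem a1 b1 a2 b2 ha1 hb1 ha2 hb2
  · exact absurd ⟨u, h1, h2, hL, hu1, hu2, hnotmem⟩ hno

lemma transfer_line {M0 Ma Mb : WM V} (h0a : Sub M0 Ma) (h0b : Sub M0 Mb)
    (hiab : Ma.carrier ∩ Mb.carrier = M0.carrier)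
    {a' b' w : V} (ha' : a' ∈ M0.carrier) (hb' : b' ∈ M0.carrier) (hw : w ∈ Ma.carrier)
    (h : OnAmalgLine Ma Mb a' b' w) : w ∈ lineOf Ma.R a' b' := by
  rcases h with ⟨_, hl⟩ | ⟨hwb, hl⟩
  · exact hl
  · have hw0 : w ∈ M0.carrier := by rw [← hiab]; exact ⟨hw, hwb⟩
    rcases mem_lineOf.mp hl with h | h | hR
    · exact mem_lineOf.mpr (Or.inl h)
    · exact mem_lineOf.mpr (Or.inr (Or.inl h))
    · exact mem_lineOf.mpr (Or.inr (Or.inr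
        ((h0a.rel a' ha' b' hb' w hw0).mp ((h0b.rel a' ha' b' hb' w hw0).mpr hR))))

lemma amalgR_restrict {M0 Ma Mb : WM V} (h0a : Sub M0 Ma) (h0b : Sub M0 Mb)
    (hiab : Ma.carrier ∩ Mb.carrier = M0.carrier)
    {a b c : V} (ha : a ∈ Ma.carrier) (hb : b ∈ Ma.carrier) (hc : c ∈ Ma.carrier)
    (h : AmalgR M0 Ma Mb a b c) : Ma.R a b c := by
  rcases h with h | h | ⟨hab, hac, hbc, a', ha', b', hb', hab', hA, hB, hC⟩
  · exact h
  · obtain ⟨ha2, hb2, hc2⟩ := Mb.R_mem a b c h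
    have ha0 : a ∈ M0.carrier := by rw [← hiab]; exact ⟨ha, ha2⟩
    have hb0 : b ∈ M0.carrier := by rw [← hiab]; exact ⟨hb, hb2⟩
    have hc0 : c ∈ M0.carrier := by rw [← hiab]; exact ⟨hc, hc2⟩
    exact (h0a.rel a ha0 b hb0 c hc0).mp ((h0b.rel a ha0 b hb0 c hc0).mpr h)
  · have hA' := transfer_line h0a h0b hiab ha' hb' ha hA
    have hB' := transfer_line h0a h0b hiab ha' hb' hb hB
    have hC' := transfer_line h0a h0b hiab ha' hb' hc hC
    have heq : lineOf Ma.R a b = lineOf Ma.R a' b' := line_eq Ma hab' hA' hB' hab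
    have hc' : c ∈ lineOf Ma.R a b := by rw [heq]; exact hC'
    rcases mem_lineOf.mp hc' with h | h | h
    · exact absurd h.symm hac
    · exact absurd h.symm hbc
    · exact h

lemma ProjPlane.exists_not_incid (P : ProjPlane) (l : P.Line) : ∃ x, ¬ P.incid x l := by
  obtain ⟨p1, p2, p3, p4, _, _, _, _, _, _, hnc⟩ := P.nondeg
  by_contra h
  push_neg at h
  exact (hnc l).1 ⟨h p1, h p2, h p3⟩

lemma ProjPlane.exists_three (P : ProjPlane) (l : P.Line) :
    ∃ x y z : P.Point, x ≠ y ∧ x ≠ z ∧ y ≠ z ∧ P.incid x l ∧ P.incid y l ∧ P.incid z l := by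
  obtain ⟨p1, p2, p3, p4, h12, h13, h14, h23, h24, h34, hnc⟩ := P.nondeg
  have two_on : ∀ a b c d : P.Point, a ≠ b → P.incid a l → P.incid b l → c ≠ d →
      ¬ P.incid c l →
      (¬ ∃ m, P.incid c m ∧ P.incid d m ∧ P.incid a m) →
      (¬ ∃ m, P.incid c m ∧ P.incid d m ∧ P.incid b m) →
      ∃ x y z : P.Point, x ≠ y ∧ x ≠ z ∧ y ≠ z ∧ P.incid x l ∧ P.incid y l ∧ P.incid z l := by
    intro a b c d hab ha hb hcd hc hnca hncb
    obtain ⟨m, ⟨hcm, hdm⟩, _⟩ := P.unique_line c d hcd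
    have hml : m ≠ l := fun h => hc (h ▸ hcm)
    obtain ⟨t, ⟨htm, htl⟩, _⟩ := P.unique_point m l hml
    have hta : t ≠ a := fun h => hnca ⟨m, hcm, hdm, h ▸ htm⟩
    have htb : t ≠ b := fun h => hncb ⟨m, hcm, hdm, h ▸ htm⟩
    exact ⟨a, b, t, hab, hta.symm, htb.symm, ha, hb, htl⟩
  have three_off : ∀ a b c : P.Point, a ≠ b → a ≠ c → b ≠ c →
      ¬ P.incid a l → ¬ P.incid b l → ¬ P.incid c l →
      (¬ ∃ m, P.incid a m ∧ P.incid b m ∧ P.incid c m) →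
      ∃ x y z : P.Point, x ≠ y ∧ x ≠ z ∧ y ≠ z ∧ P.incid x l ∧ P.incid y l ∧ P.incid z l := by
    intro a b c hab hac hbc ha hb hc hnc'
    obtain ⟨m1, ⟨ham1, hbm1⟩, _⟩ := P.unique_line a b hab
    obtain ⟨m2, ⟨ham2, hcm2⟩, _⟩ := P.unique_line a c hac
    obtain ⟨m3, ⟨hbm3, hcm3⟩, _⟩ := P.unique_line b c hbc
    have hm1l : m1 ≠ l := fun h => ha (h ▸ ham1)
    have hm2l : m2 ≠ l := fun h => ha (h ▸ ham2)
    have hm3l : m3 ≠ l := fun h => hb (h ▸ hbm3)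
    obtain ⟨t1, ⟨ht1m, ht1l⟩, _⟩ := P.unique_point m1 l hm1l
    obtain ⟨t2, ⟨ht2m, ht2l⟩, _⟩ := P.unique_point m2 l hm2l
    obtain ⟨t3, ⟨ht3m, ht3l⟩, _⟩ := P.unique_point m3 l hm3l
    have hm12 : m1 ≠ m2 := fun h => hnc' ⟨m1, ham1, hbm1, h ▸ hcm2⟩
    have hm13 : m1 ≠ m3 := fun h => hnc' ⟨m1, ham1, hbm1, h ▸ hcm3⟩
    have hm23 : m2 ≠ m3 := fun h => hnc' ⟨m2, ham2, h ▸ hbm3, hcm2⟩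
    have h12' : t1 ≠ t2 := by
      intro h
      obtain ⟨u, _, huu⟩ := P.unique_point m1 m2 hm12
      have e1 : t1 = u := (huu t1 ⟨ht1m, h ▸ ht2m⟩).symm ▸ rfl
      have e2 : a = u := (huu a ⟨ham1, ham2⟩).symm ▸ rfl
      exact ha ((e2.trans e1.symm) ▸ ht1l)
    have h13' : t1 ≠ t3 := by
      intro h
      obtain ⟨u, _, huu⟩ := P.unique_point m1 m3 hm13
      have e1 := huu t1 ⟨ht1m, h ▸ ht3m⟩
      have e2 := huu b ⟨hbm1, hbm3⟩
      exact hb ((e2.trans e1.symm) ▸ ht1l)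
    have h23' : t2 ≠ t3 := by
      intro h
      obtain ⟨u, _, huu⟩ := P.unique_point m2 m3 hm23
      have e1 := huu t2 ⟨ht2m, h ▸ ht3m⟩
      have e2 := huu c ⟨hcm2, hcm3⟩
      exact hc ((e2.trans e1.symm) ▸ ht2l)
    exact ⟨t1, t2, t3, h12', h13', h23', ht1l, ht2l, ht3l⟩
  by_cases h1 : P.incid p1 l
  · by_cases h2 : P.incid p2 l
    · have h3 : ¬ P.incid p3 l := fun h => (hnc l).1 ⟨h1, h2, h⟩
      exact two_on p1 p2 p3 p4 h12 h1 h2 h34 h3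
        (fun ⟨m, hm1, hm2, hm3⟩ => (hnc m).2.2.1 ⟨hm3, hm1, hm2⟩)
        (fun ⟨m, hm1, hm2, hm3⟩ => (hnc m).2.2.2 ⟨hm3, hm1, hm2⟩)
    · by_cases h3 : P.incid p3 l
      · have h4 : ¬ P.incid p4 l := fun h => (hnc l).2.2.1 ⟨h1, h3, h⟩
        exact two_on p1 p3 p2 p4 h13 h1 h3 h24 h2
          (fun ⟨m, hm1, hm2, hm3⟩ => (hnc m).2.1 ⟨hm3, hm1, hm2⟩)
          (fun ⟨m, hm1, hm2, hm3⟩ => (hnc m).2.2.2 ⟨hm1, hm3, hm2⟩)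
      · by_cases h4 : P.incid p4 l
        · exact two_on p1 p4 p2 p3 h14 h1 h4 h23 h2
            (fun ⟨m, hm1, hm2, hm3⟩ => (hnc m).1 ⟨hm3, hm1, hm2⟩)
            (fun ⟨m, hm1, hm2, hm3⟩ => (hnc m).2.2.2 ⟨hm1, hm2, hm3⟩)
        · exact three_off p2 p3 p4 h23 h24 h34 h2 h3 h4
            (fun ⟨m, hm⟩ => (hnc m).2.2.2 hm)
  · by_cases h2 : P.incid p2 l
    · by_cases h3 : P.incid p3 l
      · have h4 : ¬ P.incid p4 l := fun h => (hnc l).2.2.2 ⟨h2, h3, h⟩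
        exact two_on p2 p3 p1 p4 h23 h2 h3 h14 h1
          (fun ⟨m, hm1, hm2, hm3⟩ => (hnc m).2.1 ⟨hm1, hm3, hm2⟩)
          (fun ⟨m, hm1, hm2, hm3⟩ => (hnc m).2.2.1 ⟨hm1, hm3, hm2⟩)
      · by_cases h4 : P.incid p4 l
        · exact two_on p2 p4 p1 p3 h24 h2 h4 h13 h1
            (fun ⟨m, hm1, hm2, hm3⟩ => (hnc m).1 ⟨hm1, hm3, hm2⟩)
            (fun ⟨m, hm1, hm2, hm3⟩ => (hnc m).2.2.1 ⟨hm1, hm2, hm3⟩)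
        · exact three_off p1 p3 p4 h13 h14 h34 h1 h3 h4
            (fun ⟨m, hm⟩ => (hnc m).2.2.1 hm)
    · by_cases h3 : P.incid p3 l
      · by_cases h4 : P.incid p4 l
        · exact two_on p3 p4 p1 p2 h34 h3 h4 h12 h1
            (fun ⟨m, hm1, hm2, hm3⟩ => (hnc m).1 ⟨hm1, hm2, hm3⟩)
            (fun ⟨m, hm1, hm2, hm3⟩ => (hnc m).2.1 ⟨hm1, hm2, hm3⟩)
        · exact three_off p1 p2 p4 h12 h14 h24 h1 h2 h4
            (fun ⟨m, hm⟩ => (hnc m).2.1 hm)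
      · exact three_off p1 p2 p3 h12 h13 h23 h1 h2 h3
          (fun ⟨m, hm⟩ => (hnc m).1 hm)
  
lemma ProjPlane.third_on (P : ProjPlane) (l : P.Line) {p q : P.Point}
    (hp : P.incid p l) (hq : P.incid q l) :
    ∃ r, r ≠ p ∧ r ≠ q ∧ P.incid r l := by
  obtain ⟨x, y, z, hxy, hxz, hyz, hx, hy, hz⟩ := P.exists_three l
  by_cases hxp : x = p
  · by_cases hyq : y = q
    · exact ⟨z, fun h => hxz (hxp.trans h.symm), fun h => hyz (hyq.trans h.symm), hz⟩
    · exact ⟨y, fun h => hxy (hxp.trans h.symm), hyq, hy⟩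
  · by_cases hxq : x = q
    · by_cases hyp : y = p
      · exact ⟨z, fun h => hyz (hyp.trans h.symm), fun h => hxz (hxq.trans h.symm), hz⟩
      · exact ⟨y, hyp, fun h => hxy (hxq.trans h.symm), hy⟩
    · exact ⟨x, hxp, hxq, hx⟩


lemma cross_line {V : Type*} {M0 M1 M2 M3 : WM V}
    (h3R : ∀ a b c, M3.R a b c ↔ AmalgR M0 M1 M2 a b c)
    {u v z : V} (hu1 : u ∈ M1.carrier) (hu2 : u ∉ M2.carrier)
    (hv2 : v ∈ M2.carrier) (hv1 : v ∉ M1.carrier)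
    (hz : M3.R u v z) :
    ∃ a' ∈ M0.carrier, ∃ b' ∈ M0.carrier, a' ≠ b' ∧
      u ∈ lineOf M1.R a' b' ∧ v ∈ lineOf M2.R a' b' ∧
      lineOf M3.R u v = lineOf M3.R a' b' := by
  rcases (h3R u v z).mp hz with h | h | ⟨huv, _, _, a', ha', b', hb', hab, hOu, hOv, _⟩
  · exact absurd (M1.R_mem u v z h).2.1 hv1
  · exact absurd (M2.R_mem u v z h).1 hu2
  · have hu_line : u ∈ lineOf M1.R a' b' := by
      rcases hOu with ⟨_, h⟩ | ⟨h2, _⟩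
      · exact h
      · exact absurd h2 hu2
    have hv_line : v ∈ lineOf M2.R a' b' := by
      rcases hOv with ⟨h1, _⟩ | ⟨_, h⟩
      · exact absurd h1 hv1
      · exact h
    have hu3 : u ∈ lineOf M3.R a' b' := by
      rcases mem_lineOf.mp hu_line with h | h | h
      · exact mem_lineOf.mpr (Or.inl h)
      · exact mem_lineOf.mpr (Or.inr (Or.inl h))
      · exact mem_lineOf.mpr (Or.inr (Or.inr ((h3R _ _ _).mpr (Or.inl h))))
    have hv3 : v ∈ lineOf M3.R a' b' := by
      rcases mem_lineOf.mp hv_line with h | h | h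
      · exact mem_lineOf.mpr (Or.inl h)
      · exact mem_lineOf.mpr (Or.inr (Or.inl h))
      · exact mem_lineOf.mpr (Or.inr (Or.inr ((h3R _ _ _).mpr (Or.inr (Or.inl h)))))
    exact ⟨a', ha', b', hb', hab, hu_line, hv_line, line_eq M3 hab hu3 hv3 huv⟩

lemma line_lift1 {V : Type*} {M0 M1 M2 M3 : WM V}
    (h3R : ∀ a b c, M3.R a b c ↔ AmalgR M0 M1 M2 a b c) {c d : V} :
    lineOf M1.R c d ⊆ lineOf M3.R c d := by
  intro z hz
  rcases mem_lineOf.mp hz with h | h | h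
  · exact mem_lineOf.mpr (Or.inl h)
  · exact mem_lineOf.mpr (Or.inr (Or.inl h))
  · exact mem_lineOf.mpr (Or.inr (Or.inr ((h3R c d z).mpr (Or.inl h))))

lemma line_lift2 {V : Type*} {M0 M1 M2 M3 : WM V}
    (h3R : ∀ a b c, M3.R a b c ↔ AmalgR M0 M1 M2 a b c) {c d : V} :
    lineOf M2.R c d ⊆ lineOf M3.R c d := by
  intro z hz
  rcases mem_lineOf.mp hz with h | h | h
  · exact mem_lineOf.mpr (Or.inl h)
  · exact mem_lineOf.mpr (Or.inr (Or.inl h))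
  · exact mem_lineOf.mpr (Or.inr (Or.inr ((h3R c d z).mpr (Or.inr (Or.inl h)))))

lemma part_i {V : Type*} {M0 Ma Mb M3 : WM V} (h0a : Sub M0 Ma) (h0b : Sub M0 Mb)
    (hiab : Ma.carrier ∩ Mb.carrier = M0.carrier)
    (h3R : ∀ a b c, M3.R a b c ↔ AmalgR M0 Ma Mb a b c)
    {x y : V} (hx : x ∈ Ma.carrier) (hy : y ∈ Ma.carrier) (hxy : x ≠ y)
    (hno : ¬ ∃ a0 ∈ M0.carrier, ∃ a1 ∈ M0.carrier, a0 ≠ a1 ∧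
      lineOf Ma.R x y = lineOf Ma.R a0 a1) :
    lineOf M3.R x y = lineOf Ma.R x y := by
  ext z
  rw [mem_lineOf, mem_lineOf]
  constructor
  · rintro (h | h | h)
    · exact Or.inl h
    · exact Or.inr (Or.inl h)
    · rcases (h3R x y z).mp h with h' | h' | ⟨_, _, _, a', ha', b', hb', hab', hA, hB, _⟩
      · exact Or.inr (Or.inr h')
      · exfalso
        obtain ⟨hx2, hy2, _⟩ := Mb.R_mem x y z h'
        have hx0 : x ∈ M0.carrier := by rw [← hiab]; exact ⟨hx, hx2⟩
        have hy0 : y ∈ M0.carrier := by rw [← hiab]; exact ⟨hy, hy2⟩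
        exact hno ⟨x, hx0, y, hy0, hxy, rfl⟩
      · exfalso
        have hA' := transfer_line h0a h0b hiab ha' hb' hx hA
        have hB' := transfer_line h0a h0b hiab ha' hb' hy hB
        exact hno ⟨a', ha', b', hb', hab', line_eq Ma hab' hA' hB' hxy⟩
  · rintro (h | h | h)
    · exact Or.inl h
    · exact Or.inr (Or.inl h)
    · exact Or.inr (Or.inr ((h3R x y z).mpr (Or.inl h)))

/-- the canonical amalgam of two simple ∧-matroids of rank ≤ 3 omitting
the matroid of a finite projective plane `P` again omits it; moreover (i) lines of `M_j`
not spanned by two points of the base `M0` gain no new points in the amalgam, and (ii)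
every line of the amalgam meeting `M1` and `M2` in at most one point each has exactly
two points. -/
theorem amalgam_omits (V : Type) (P : ProjPlane) [Finite P.Point] [Finite P.Line]
    (M0 M1 M2 M3 : WM V)
    (h01 : Sub M0 M1) (h02 : Sub M0 M2)
    (hint : M1.carrier ∩ M2.carrier = M0.carrier)
    (hO1 : Omits M1 P) (hO2 : Omits M2 P)
    (h3 : IsCanonicalAmalgam M0 M1 M2 M3) :
    Omits M3 P ∧
    (∀ Mj : WM V, (Mj = M1 ∨ Mj = M2) → ∀ x ∈ Mj.carrier, ∀ y ∈ Mj.carrier, x ≠ y →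
      (¬ ∃ a0 ∈ M0.carrier, ∃ a1 ∈ M0.carrier, a0 ≠ a1 ∧
          lineOf Mj.R x y = lineOf Mj.R a0 a1) →
      lineOf M3.R x y = lineOf Mj.R x y) ∧
    (∀ x ∈ M3.carrier, ∀ y ∈ M3.carrier, x ≠ y →
      (lineOf M3.R x y ∩ M1.carrier).Subsingleton →
      (lineOf M3.R x y ∩ M2.carrier).Subsingleton →
      lineOf M3.R x y = {x, y}) := by
  have hint21 : M2.carrier ∩ M1.carrier = M0.carrier := by rw [Set.inter_comm]; exact hint
  have h3R2 : ∀ a b c, M3.R a b c ↔ AmalgR M0 M2 M1 a b c := fun a b c =>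
    ⟨fun h => amalgR_symm ((h3.R_iff a b c).mp h),
     fun h => (h3.R_iff a b c).mpr (amalgR_symm h)⟩
  have hR1 : ∀ a b c, a ∈ M1.carrier → b ∈ M1.carrier → c ∈ M1.carrier →
      (M3.R a b c ↔ M1.R a b c) := fun a b c ha hb hc =>
    ⟨fun h => amalgR_restrict h01 h02 hint ha hb hc ((h3.R_iff a b c).mp h),
     fun h => (h3.R_iff a b c).mpr (Or.inl h)⟩
  have hR2 : ∀ a b c, a ∈ M2.carrier → b ∈ M2.carrier → c ∈ M2.carrier →
      (M3.R a b c ↔ M2.R a b c) := fun a b c ha hb hc =>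
    ⟨fun h => amalgR_restrict h02 h01 hint21 ha hb hc ((h3R2 a b c).mp h),
     fun h => (h3.R_iff a b c).mpr (Or.inr (Or.inl h))⟩
  refine ⟨?_, ?_, ?_⟩
  · -- Omits M3 P
    rintro ⟨e, einj, emem, eR⟩
    by_cases hall1 : ∀ r, e r ∈ M1.carrier
    · exact hO1 ⟨e, einj, hall1,
        fun a b c => (eR a b c).trans (hR1 _ _ _ (hall1 a) (hall1 b) (hall1 c))⟩
    by_cases hall2 : ∀ r, e r ∈ M2.carrier
    · exact hO2 ⟨e, einj, hall2,
        fun a b c => (eR a b c).trans (hR2 _ _ _ (hall2 a) (hall2 b) (hall2 c))⟩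
    push_neg at hall1 hall2
    obtain ⟨q, hq1⟩ := hall1
    obtain ⟨p, hp2⟩ := hall2
    have hmem3 : ∀ r, e r ∈ M1.carrier ∪ M2.carrier := fun r => by
      rw [← h3.carrier_eq]; exact emem r
    have hp1 : e p ∈ M1.carrier := (hmem3 p).resolve_right hp2
    have hq2 : e q ∈ M2.carrier := (hmem3 q).resolve_left hq1
    have hpq : p ≠ q := fun h => hp2 (by rw [h]; exact hq2)
    obtain ⟨l0, ⟨hpl0, hql0⟩, hl0u⟩ := P.unique_line p q hpq
    have memL0 : ∀ s, e s ∈ lineOf M3.R (e p) (e q) → P.incid s l0 := by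
      intro s hs
      rcases mem_lineOf.mp hs with h | h | h
      · rw [einj h]; exact hpl0
      · rw [einj h]; exact hql0
      · obtain ⟨_, _, _, l, hpl, hql, hsl⟩ := (eR p q s).mpr h
        rw [hl0u l ⟨hpl, hql⟩] at hsl
        exact hsl
    obtain ⟨r, hrp, hrq, hrl⟩ := P.third_on l0 hpl0 hql0
    have hR3pqr : M3.R (e p) (e q) (e r) := (eR p q r).mp
      ⟨hpq, fun h => hrp h.symm, fun h => hrq h.symm, l0, hpl0, hql0, hrl⟩
    obtain ⟨a1, ha1, b1, hb1, hab1, Hp1, Hq1, HL1⟩ :=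
      cross_line h3.R_iff hp1 hp2 hq2 hq1 hR3pqr
    have caseB : ∀ s, ¬ P.incid s l0 → e s ∈ M2.carrier → e s ∉ M1.carrier → False := by
      intro s hsoff hs2 hs1
      have hps : p ≠ s := fun h => hsoff (by rw [← h]; exact hpl0)
      obtain ⟨ls, ⟨hpls, hsls⟩, _⟩ := P.unique_line p s hps
      obtain ⟨r2, hr2p, hr2s, hr2l⟩ := P.third_on ls hpls hsls
      have hR3' : M3.R (e p) (e s) (e r2) := (eR p s r2).mp
        ⟨hps, fun h => hr2p h.symm, fun h => hr2s h.symm, ls, hpls, hsls, hr2l⟩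
      obtain ⟨a2, ha2, b2, hb2, hab2, Hp2', Hs2', HL2⟩ :=
        cross_line h3.R_iff hp1 hp2 hs2 hs1 hR3'
      have hLdist : lineOf M1.R a1 b1 ≠ lineOf M1.R a2 b2 := by
        intro h
        have ha2m : a2 ∈ lineOf M3.R a1 b1 :=
          line_lift1 h3.R_iff (by rw [h]; exact self_mem_line_left _ _ _)
        have hb2m : b2 ∈ lineOf M3.R a1 b1 :=
          line_lift1 h3.R_iff (by rw [h]; exact self_mem_line_right _ _ _)
        have heq3 : lineOf M3.R a2 b2 = lineOf M3.R a1 b1 := line_eq M3 hab1 ha2m hb2m hab2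
        have hes : e s ∈ lineOf M3.R (e p) (e q) := by
          rw [HL1, ← heq3, ← HL2]; exact self_mem_line_right _ _ _
        exact hsoff (memL0 s hes)
      have hep0 : e p ∈ M0.carrier :=
        wedge_forces h01 hp1 ha1 hb1 ha2 hb2 hab1 hab2 hLdist Hp1 Hp2'
          (fun h => hp2 (by rw [h]; exact h02.sub ha1))
          (fun h => hp2 (by rw [h]; exact h02.sub hb1))
          (fun h => hp2 (by rw [h]; exact h02.sub ha2))
          (fun h => hp2 (by rw [h]; exact h02.sub hb2))
      exact hp2 (h02.sub hep0)
    have caseA : ∀ s, ¬ P.incid s l0 → e s ∈ M1.carrier → e s ∉ M2.carrier → False := by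
      intro s hsoff hs1 hs2
      have hsq : s ≠ q := fun h => hsoff (by rw [h]; exact hql0)
      obtain ⟨ls, ⟨hsls, hqls⟩, _⟩ := P.unique_line s q hsq
      obtain ⟨r2, hr2s, hr2q, hr2l⟩ := P.third_on ls hsls hqls
      have hR3' : M3.R (e s) (e q) (e r2) := (eR s q r2).mp
        ⟨hsq, fun h => hr2s h.symm, fun h => hr2q h.symm, ls, hsls, hqls, hr2l⟩
      obtain ⟨a2, ha2, b2, hb2, hab2, Hs2', Hq2', HL2⟩ :=
        cross_line h3.R_iff hs1 hs2 hq2 hq1 hR3'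
      have hLdist : lineOf M2.R a1 b1 ≠ lineOf M2.R a2 b2 := by
        intro h
        have ha2m : a2 ∈ lineOf M3.R a1 b1 :=
          line_lift2 h3.R_iff (by rw [h]; exact self_mem_line_left _ _ _)
        have hb2m : b2 ∈ lineOf M3.R a1 b1 :=
          line_lift2 h3.R_iff (by rw [h]; exact self_mem_line_right _ _ _)
        have heq3 : lineOf M3.R a2 b2 = lineOf M3.R a1 b1 := line_eq M3 hab1 ha2m hb2m hab2
        have hes : e s ∈ lineOf M3.R (e p) (e q) := by
          rw [HL1, ← heq3, ← HL2]; exact self_mem_line_left _ _ _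
        exact hsoff (memL0 s hes)
      have heq0 : e q ∈ M0.carrier :=
        wedge_forces h02 hq2 ha1 hb1 ha2 hb2 hab1 hab2 hLdist Hq1 Hq2'
          (fun h => hq1 (by rw [h]; exact h01.sub ha1))
          (fun h => hq1 (by rw [h]; exact h01.sub hb1))
          (fun h => hq1 (by rw [h]; exact h01.sub ha2))
          (fun h => hq1 (by rw [h]; exact h01.sub hb2))
      exact hq1 (h01.sub heq0)
    obtain ⟨s, hsoff⟩ := P.exists_not_incid l0
    by_cases hs2 : e s ∈ M2.carrier
    · by_cases hs1 : e s ∈ M1.carrier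
      · -- s is a base point
        have hs0 : e s ∈ M0.carrier := by rw [← hint]; exact ⟨hs1, hs2⟩
        have hps : p ≠ s := fun h => hsoff (by rw [← h]; exact hpl0)
        obtain ⟨ls, ⟨hpls, hsls⟩, _⟩ := P.unique_line p s hps
        obtain ⟨t, htp, hts, htl⟩ := P.third_on ls hpls hsls
        have htoff : ¬ P.incid t l0 := by
          intro h
          have hlsl0 : ls ≠ l0 := fun hh => hsoff (by rw [← hh]; exact hsls)
          obtain ⟨w, _, hwu⟩ := P.unique_point ls l0 hlsl0
          exact htp ((hwu t ⟨htl, h⟩).trans (hwu p ⟨hpls, hpl0⟩).symm)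
        by_cases ht2 : e t ∈ M2.carrier
        · by_cases ht1 : e t ∈ M1.carrier
          · have ht0 : e t ∈ M0.carrier := by rw [← hint]; exact ⟨ht1, ht2⟩
            have hst : s ≠ t := fun h => hts h.symm
            have hest : e s ≠ e t := fun h => hst (einj h)
            have hRpst : M3.R (e p) (e s) (e t) := (eR p s t).mp
              ⟨hps, fun h => htp h.symm, hst, ls, hpls, hsls, htl⟩
            have hM1R : M1.R (e p) (e s) (e t) := (hR1 _ _ _ hp1 hs1 ht1).mp hRpst
            have hpline : e p ∈ lineOf M1.R (e s) (e t) :=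
              mem_lineOf.mpr (Or.inr (Or.inr (M1.symm_rot _ _ _ hM1R)))
            have hLdist : lineOf M1.R (e s) (e t) ≠ lineOf M1.R a1 b1 := by
              intro h
              have hesm : e s ∈ lineOf M3.R a1 b1 :=
                line_lift1 h3.R_iff (by rw [← h]; exact self_mem_line_left _ _ _)
              have : e s ∈ lineOf M3.R (e p) (e q) := by rw [HL1]; exact hesm
              exact hsoff (memL0 s this)
            have hep0 : e p ∈ M0.carrier :=
              wedge_forces h01 hp1 hs0 ht0 ha1 hb1 hest hab1 hLdist hpline Hp1
                (fun h => hp2 (by rw [h]; exact h02.sub hs0))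
                (fun h => hp2 (by rw [h]; exact h02.sub ht0))
                (fun h => hp2 (by rw [h]; exact h02.sub ha1))
                (fun h => hp2 (by rw [h]; exact h02.sub hb1))
            exact hp2 (h02.sub hep0)
          · exact caseB t htoff ht2 ht1
        · exact caseA t htoff ((hmem3 t).resolve_right ht2) ht2
      · exact caseB s hsoff hs2 hs1
    · exact caseA s hsoff ((hmem3 s).resolve_right hs2) hs2
  · -- part (i)
    intro Mj hMj x hx y hy hxy hno
    rcases hMj with rfl | rfl
    · exact part_i h01 h02 hint h3.R_iff hx hy hxy hno
    · exact part_i h02 h01 hint21 h3R2 hx hy hxy hno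
  · -- part (ii)
    intro x _ y _ hxy hs1 hs2
    apply Subset.antisymm
    · intro z hz
      rcases mem_lineOf.mp hz with h | h | h
      · simp [h]
      · simp [h]
      · exfalso
        rcases (h3.R_iff x y z).mp h with h' | h' | ⟨_, _, _, a', ha', b', hb', hab', hA, hB, _⟩
        · obtain ⟨hx1, hy1, _⟩ := M1.R_mem x y z h'
          exact hxy (hs1 ⟨self_mem_line_left _ _ _, hx1⟩ ⟨self_mem_line_right _ _ _, hy1⟩)
        · obtain ⟨hx2, hy2, _⟩ := M2.R_mem x y z h'
          exact hxy (hs2 ⟨self_mem_line_left _ _ _, hx2⟩ ⟨self_mem_line_right _ _ _, hy2⟩)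
        · have haline : a' ∈ lineOf M3.R x y := by
            by_cases h1 : a' = x
            · exact mem_lineOf.mpr (Or.inl h1)
            by_cases h2 : a' = y
            · exact mem_lineOf.mpr (Or.inr (Or.inl h2))
            exact mem_lineOf.mpr (Or.inr (Or.inr ((h3.R_iff x y a').mpr (Or.inr (Or.inr
              ⟨hxy, fun hh => h1 hh.symm, fun hh => h2 hh.symm, a', ha', b', hb', hab',
               hA, hB, Or.inl ⟨h01.sub ha', self_mem_line_left _ _ _⟩⟩)))))
          have hbline : b' ∈ lineOf M3.R x y := by
            by_cases h1 : b' = x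
            · exact mem_lineOf.mpr (Or.inl h1)
            by_cases h2 : b' = y
            · exact mem_lineOf.mpr (Or.inr (Or.inl h2))
            exact mem_lineOf.mpr (Or.inr (Or.inr ((h3.R_iff x y b').mpr (Or.inr (Or.inr
              ⟨hxy, fun hh => h1 hh.symm, fun hh => h2 hh.symm, a', ha', b', hb', hab',
               hA, hB, Or.inl ⟨h01.sub hb', self_mem_line_right _ _ _⟩⟩)))))
          exact hab' (hs1 ⟨haline, h01.sub ha'⟩ ⟨hbline, h01.sub hb'⟩)
    · intro z hz
      rcases hz with h | h
      · exact mem_lineOf.mpr (Or.inl h)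
      · exact mem_lineOf.mpr (Or.inr (Or.inl h))
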